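/- For every c > 1, setting η = 1 + 2·log c, one has ∫_{k_min(η)}^{1/c} 2·(η − V(k))^{−1/2} dk < 2·arcsin(1/c). Consequently the change of polar angle from M to N along the lower half of the Abresch–Langer trajectory of energy c, namely Δθ_{MN}(c) = π − 2·arcsin(1/c) + ∫_{k_min(η)}^{1/c} 2·(η − V(k))^{−1/2} dk, is strictly less than π. -/
import Mathlib


open Real MeasureTheory

set_option maxHeartbeats 1000000

noncomputable def V (k : ℝ) : ℝ := k ^ 2 - 2 * Real.log k

lemma V_lt {x y : ℝ} (hx : 0 < x) (hxy : x < y) (hy : y ≤ 1) : V y < V x := by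
  have hy0 : 0 < y := hx.trans hxy
  have h := Real.log_le_sub_one_of_pos (show 0 < x / y by positivity)
  rw [Real.log_div hx.ne' hy0.ne'] at h
  have h2 : y * (x / y) = x := by field_simp
  have h3 : y * (Real.log x - Real.log y) ≤ x - y := by
    have h' := mul_le_mul_of_nonneg_left h hy0.le
    nlinarith [h']
  have h4 : 0 < 2 - y * (x + y) := by nlinarith
  unfold V
  nlinarith [h3, h4, mul_pos (sub_pos.2 hxy) h4, hy0]

lemma key_ineq {b k : ℝ} (hk : 0 < k) (hkb : k < b) (hb : b ≤ 1) :
    0 < b ^ 2 - k ^ 2 + 2 * b ^ 2 * k ^ 2 * (Real.log k - Real.log b) := by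
  have hb0 : 0 < b := hk.trans hkb
  have h := Real.log_le_sub_one_of_pos (show 0 < b / k by positivity)
  rw [Real.log_div hb0.ne' hk.ne'] at h
  have hW : Real.log k - Real.log b < 0 := sub_neg.2 (Real.log_lt_log hk hkb)
  have h1 : k - b ≤ k * (Real.log k - Real.log b) := by
    have h' := mul_le_mul_of_nonneg_left h hk.le
    have h2 : k * (b / k) = b := by field_simp
    nlinarith [h']
  nlinarith [h1, hW, sq_nonneg (b - k),
    mul_nonneg (mul_nonneg (sub_nonneg.2 (show b ^ 2 ≤ 1 by nlinarith)) (sq_nonneg k))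
      (neg_nonneg.2 hW.le),
    mul_le_mul_of_nonneg_left h1 (show (0:ℝ) ≤ 2 * k by positivity)]

theorem stmt_8 (kmin : ℝ → ℝ)
    (hkmin : ∀ η : ℝ, 1 < η → 0 < kmin η ∧ kmin η < 1 ∧ V (kmin η) = η)
    (c : ℝ) (hc : 1 < c) :
    (∫ k in (kmin (1 + 2 * Real.log c))..(1 / c),
        2 * (Real.sqrt ((1 + 2 * Real.log c) - V k))⁻¹) < 2 * Real.arcsin (1 / c) ∧
    π - 2 * Real.arcsin (1 / c) +
      (∫ k in (kmin (1 + 2 * Real.log c))..(1 / c),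
        2 * (Real.sqrt ((1 + 2 * Real.log c) - V k))⁻¹) < π := by
  have hc0 : (0:ℝ) < c := lt_trans one_pos hc
  have hlc : 0 < Real.log c := Real.log_pos hc
  set η : ℝ := 1 + 2 * Real.log c with hηdef
  have hη1 : 1 < η := by rw [hηdef]; linarith
  obtain ⟨ha0, ha1, haV⟩ := hkmin η hη1
  set a : ℝ := kmin η with hadef
  set b : ℝ := 1 / c with hbdef
  have hb0 : 0 < b := by rw [hbdef]; positivity
  have hb1 : b < 1 := by rw [hbdef, div_lt_one hc0]; exact hc
  have hlogb : Real.log b = -Real.log c := by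
    rw [hbdef, Real.log_div one_ne_zero hc0.ne', Real.log_one]; ring
  have hVb : η - V b = 1 - b ^ 2 := by
    simp only [V, hηdef, hlogb]; ring
  have hab : a < b := by
    by_contra hcon
    push_neg at hcon
    rcases eq_or_lt_of_le hcon with h | h
    · rw [h] at hVb
      rw [haV] at hVb
      nlinarith [mul_pos (show (0:ℝ) < 1 - b by linarith) (show (0:ℝ) < 1 + b by linarith)]
    · have h5 := V_lt hb0 h ha1.le
      rw [haV] at h5
      nlinarith [mul_pos (show (0:ℝ) < 1 - b by linarith) (show (0:ℝ) < 1 + b by linarith)]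
  have hpos : ∀ k, a < k → k ≤ b → 0 < η - V k := by
    intro k h1 h2
    have h3 := V_lt ha0 h1 (h2.trans hb1.le)
    rw [haV] at h3; linarith
  have hposb : ∀ k, a < k → k ≤ b → η - V k ≤ 1 - b ^ 2 := by
    intro k h1 h2
    rcases eq_or_lt_of_le h2 with h | h
    · rw [h]; exact le_of_eq hVb
    · have h3 := V_lt (ha0.trans h1) h hb1.le
      linarith [hVb]
  have hq : ∀ k, a < k → k ≤ b → 0 < 1 - b ^ 2 - b ^ 2 * (η - V k) := by
    intro k h1 h2
    have h3 := hpos k h1 h2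
    have h4 := hposb k h1 h2
    nlinarith [mul_le_mul_of_nonneg_left h4 (sq_nonneg b),
      mul_pos (show (0:ℝ) < 1 - b ^ 2 by nlinarith) (show (0:ℝ) < 1 - b ^ 2 by nlinarith)]
  have h1b2 : 0 < 1 - b ^ 2 := by nlinarith
  set s : ℝ := Real.sqrt (1 - b ^ 2) with hsdef
  have hs0 : 0 < s := Real.sqrt_pos.2 h1b2
  have hs2 : s ^ 2 = 1 - b ^ 2 := Real.sq_sqrt h1b2.le
  set F : ℝ → ℝ := fun k => 2 * Real.arcsin (b * Real.sqrt (η - V k) / s) with hFdef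
  set G : ℝ → ℝ := fun k => 2 * b * (1 - k ^ 2) /
      (k * (Real.sqrt (η - V k) * Real.sqrt (1 - b ^ 2 - b ^ 2 * (η - V k)))) with hGdef
  have hptwise : ∀ x, a < x → x < b → 2 * (Real.sqrt (η - V x))⁻¹ < G x := by
    intro x hxa hxb
    have hx0 : 0 < x := ha0.trans hxa
    have hx1 : x < 1 := hxb.trans hb1
    have hu0 : 0 < η - V x := hpos x hxa hxb.le
    have hu : 0 < Real.sqrt (η - V x) := Real.sqrt_pos.2 hu0
    have hq0 : 0 < 1 - b ^ 2 - b ^ 2 * (η - V x) := hq x hxa hxb.le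
    have hr : 0 < Real.sqrt (1 - b ^ 2 - b ^ 2 * (η - V x)) := Real.sqrt_pos.2 hq0
    have hexp : η - V x = 1 - x ^ 2 + 2 * (Real.log x - Real.log b) := by
      simp only [V, hηdef]; rw [hlogb]; ring
    have hkey := key_ineq hx0 hxb hb1.le
    have hsq : x ^ 2 * (1 - b ^ 2 - b ^ 2 * (η - V x)) < b ^ 2 * (1 - x ^ 2) ^ 2 := by
      rw [hexp]; linarith [hkey]
    have hrlt : x * Real.sqrt (1 - b ^ 2 - b ^ 2 * (η - V x)) < b * (1 - x ^ 2) := by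
      have hB : 0 < b * (1 - x ^ 2) := by nlinarith
      have hA : (x * Real.sqrt (1 - b ^ 2 - b ^ 2 * (η - V x))) ^ 2 < (b * (1 - x ^ 2)) ^ 2 := by
        rw [mul_pow, mul_pow, Real.sq_sqrt hq0.le]; linarith [hsq]
      exact lt_of_pow_lt_pow_left₀ 2 hB.le hA
    simp only [hGdef]
    rw [← div_eq_mul_inv, div_lt_div_iff₀ hu (by positivity)]
    linarith [mul_lt_mul_of_pos_left hrlt (show (0:ℝ) < 2 * Real.sqrt (η - V x) by positivity)]
  have hderiv : ∀ k ∈ Set.Ioc a b, HasDerivAt F (G k) k := by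
    intro k hk
    obtain ⟨hka, hkb⟩ := hk
    have hk0 : 0 < k := ha0.trans hka
    have hu0 : 0 < η - V k := hpos k hka hkb
    have hu : 0 < Real.sqrt (η - V k) := Real.sqrt_pos.2 hu0
    have hq0 : 0 < 1 - b ^ 2 - b ^ 2 * (η - V k) := hq k hka hkb
    have hr : 0 < Real.sqrt (1 - b ^ 2 - b ^ 2 * (η - V k)) := Real.sqrt_pos.2 hq0
    have hVd : HasDerivAt (fun x => η - V x) (-(2 * k - 2 / k)) k := by
      have h1 : HasDerivAt (fun x : ℝ => x ^ 2) (2 * k) k := by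
        simpa using hasDerivAt_pow 2 k
      have h2 : HasDerivAt (fun x : ℝ => 2 * Real.log x) (2 * k⁻¹) k :=
        (Real.hasDerivAt_log hk0.ne').const_mul 2
      have h4 : HasDerivAt V (2 * k - 2 * k⁻¹) k := h1.sub h2
      exact h4.const_sub η
    have hud : HasDerivAt (fun x => Real.sqrt (η - V x))
        (-(2 * k - 2 / k) / (2 * Real.sqrt (η - V k))) k := hVd.sqrt hu0.ne'
    have hin : HasDerivAt (fun x => b * Real.sqrt (η - V x) / s)
        (b * (-(2 * k - 2 / k) / (2 * Real.sqrt (η - V k))) / s) k :=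
      (hud.const_mul b).div_const s
    have hxle : Real.sqrt (η - V k) ≤ s := by
      rw [hsdef]; exact Real.sqrt_le_sqrt (hposb k hka hkb)
    have hxlt : b * Real.sqrt (η - V k) / s < 1 := by
      rw [div_lt_one hs0]
      exact lt_of_lt_of_le (mul_lt_of_lt_one_left hu hb1) hxle
    have hxge : (0:ℝ) ≤ b * Real.sqrt (η - V k) / s := by positivity
    have hne1 : b * Real.sqrt (η - V k) / s ≠ -1 := by
      intro h; rw [h] at hxge; linarith
    have hcomp := ((Real.hasDerivAt_arcsin hne1 hxlt.ne).comp k hin).const_mul 2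
    have hFd : HasDerivAt F (2 * (1 / Real.sqrt (1 - (b * Real.sqrt (η - V k) / s) ^ 2) *
        (b * (-(2 * k - 2 / k) / (2 * Real.sqrt (η - V k))) / s))) k := by
      simp only [hFdef]
      simpa [Function.comp] using hcomp
    convert hFd using 1
    have e1 : 1 - (b * Real.sqrt (η - V k) / s) ^ 2 = (1 - b ^ 2 - b ^ 2 * (η - V k)) / s ^ 2 := by
      rw [div_pow, mul_pow, Real.sq_sqrt hu0.le, hs2]
      field_simp
    have e2 : Real.sqrt (1 - (b * Real.sqrt (η - V k) / s) ^ 2)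
        = Real.sqrt (1 - b ^ 2 - b ^ 2 * (η - V k)) / s := by
      rw [e1, Real.sqrt_div hq0.le, Real.sqrt_sq hs0.le]
    simp only [hGdef]
    rw [e2]
    field_simp
    ring
  have hcont1 : ContinuousOn (fun k => η - V k) (Set.Icc a b) := by
    intro k hk
    have hk0 : 0 < k := lt_of_lt_of_le ha0 hk.1
    have h2 : ContinuousAt V k := by
      unfold V
      exact ((continuous_pow 2).continuousAt).sub ((Real.continuousAt_log hk0.ne').const_mul 2)
    exact (continuousAt_const.sub h2).continuousWithinAt
  have hucont : ContinuousOn (fun k => Real.sqrt (η - V k)) (Set.Icc a b) :=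
    Real.continuous_sqrt.comp_continuousOn hcont1
  have hFcont : ContinuousOn F (Set.Icc a b) := by
    simp only [hFdef]
    exact continuousOn_const.mul (Real.continuous_arcsin.comp_continuousOn
      ((continuousOn_const.mul hucont).div_const s))
  set m : ℝ := (a + b) / 2 with hmdef
  have ham : a < m := by rw [hmdef]; linarith
  have hmb : m < b := by rw [hmdef]; linarith
  have hsub : Set.Icc m b ⊆ Set.Icc a b := Set.Icc_subset_Icc ham.le le_rfl
  have hmemIoc : ∀ k ∈ Set.Icc m b, a < k ∧ k ≤ b := fun k hk => ⟨lt_of_lt_of_le ham hk.1, hk.2⟩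
  have hfcont : ContinuousOn (fun k => 2 * (Real.sqrt (η - V k))⁻¹) (Set.Icc m b) := by
    apply continuousOn_const.mul
    apply ContinuousOn.inv₀ (hucont.mono hsub)
    intro k hk
    exact (Real.sqrt_pos.2 (hpos k (hmemIoc k hk).1 (hmemIoc k hk).2)).ne'
  have hrcont : ContinuousOn (fun k => Real.sqrt (1 - b ^ 2 - b ^ 2 * (η - V k)))
      (Set.Icc m b) :=
    Real.continuous_sqrt.comp_continuousOn
      (continuousOn_const.sub (continuousOn_const.mul (hcont1.mono hsub)))
  have hGcont : ContinuousOn G (Set.Icc m b) := by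
    simp only [hGdef]
    apply ContinuousOn.div
    · exact (continuous_const.mul (continuous_const.sub (continuous_pow 2))).continuousOn
    · exact continuousOn_id.mul ((hucont.mono hsub).mul hrcont)
    · intro k hk
      have h1 := (hmemIoc k hk).1
      have h2 := (hmemIoc k hk).2
      have hk0 : 0 < k := ha0.trans h1
      have hu := Real.sqrt_pos.2 (hpos k h1 h2)
      have hr := Real.sqrt_pos.2 (hq k h1 h2)
      positivity
  have harcpos : 0 < Real.arcsin b := Real.arcsin_pos.2 hb0
  have hmain : (∫ k in a..b, 2 * (Real.sqrt (η - V k))⁻¹) < 2 * Real.arcsin b := by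
    by_cases hint : IntervalIntegrable (fun k => 2 * (Real.sqrt (η - V k))⁻¹) volume a b
    · have hmm : m ∈ Set.uIcc a b := by
        rw [Set.uIcc_of_le hab.le]; exact ⟨ham.le, hmb.le⟩
      have hint1 : IntervalIntegrable (fun k => 2 * (Real.sqrt (η - V k))⁻¹) volume a m :=
        hint.mono_set (Set.uIcc_subset_uIcc Set.left_mem_uIcc hmm)
      have hint2 : IntervalIntegrable (fun k => 2 * (Real.sqrt (η - V k))⁻¹) volume m b :=
        hint.mono_set (Set.uIcc_subset_uIcc hmm Set.right_mem_uIcc)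
      have hsplit := intervalIntegral.integral_add_adjacent_intervals hint1 hint2
      have hp1 : (∫ k in a..m, 2 * (Real.sqrt (η - V k))⁻¹) ≤ F m - F a := by
        apply intervalIntegral.integral_le_sub_of_hasDeriv_right_of_le ham.le
          (hFcont.mono (Set.Icc_subset_Icc le_rfl hmb.le))
          (fun x hx => (hderiv x ⟨hx.1, (hx.2.trans hmb).le⟩).hasDerivWithinAt)
          ((intervalIntegrable_iff_integrableOn_Icc_of_le ham.le).1 hint1)
          (fun x hx => (hptwise x hx.1 (hx.2.trans hmb)).le)
      have hGint : IntervalIntegrable G volume m b :=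
        ContinuousOn.intervalIntegrable (by rw [Set.uIcc_of_le hmb.le]; exact hGcont)
      have hFTC : (∫ k in m..b, G k) = F b - F m := by
        apply intervalIntegral.integral_eq_sub_of_hasDerivAt _ hGint
        intro x hx
        rw [Set.uIcc_of_le hmb.le] at hx
        exact hderiv x ⟨lt_of_lt_of_le ham hx.1, hx.2⟩
      have hdpos : 0 < ∫ k in m..b, (G k - 2 * (Real.sqrt (η - V k))⁻¹) := by
        apply intervalIntegral.intervalIntegral_pos_of_pos_on (hGint.sub hint2)
          (fun x hx => sub_pos.2 (hptwise x (ham.trans hx.1) hx.2)) hmb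
      have hsub2 : (∫ k in m..b, (G k - 2 * (Real.sqrt (η - V k))⁻¹))
          = (∫ k in m..b, G k) - ∫ k in m..b, 2 * (Real.sqrt (η - V k))⁻¹ :=
        intervalIntegral.integral_sub hGint hint2
      have hp2 : (∫ k in m..b, 2 * (Real.sqrt (η - V k))⁻¹) < F b - F m := by
        rw [hsub2, hFTC] at hdpos; linarith
      have hFa : F a = 0 := by
        simp only [hFdef]
        rw [show η - V a = 0 by rw [haV]; ring]
        simp
      have hFb : F b = 2 * Real.arcsin b := by
        simp only [hFdef]
        rw [hVb, ← hsdef, mul_div_assoc, div_self hs0.ne', mul_one]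
      rw [← hsplit]
      linarith [hp1, hp2]
    · rw [intervalIntegral.integral_undef hint]
      linarith [harcpos]
  exact ⟨hmain, by linarith [hmain]⟩
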